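/- arXiv:1901.04032 — 5 statements merged into one kernel-verified Lean document; each statement's English description precedes it below -/
import Mathlib

section
/- For every nonnegative integer m, the pair (a,b) = (2m+1, 1) is the minimal positive integer solution of the equation a^2 - 4eb^2 = -11 with e = m^2 + m + 3 (minimal meaning that any positive solution (a',b') satisfies a' + 2b'√e ≥ a + 2b√e). -/
/-!
Write `d = 4e = (2m+1)² + 11`, so that `(2m+1)² ≤ d`. For a positive solution `(a, b)`, either
`b = 1`, and then `a² = (2m+1)²` forces `a = 2m+1`; or `b ≥ 2`, and then
`a + b√d ≥ 1 + 2√d ≥ (2m+1) + √d` because `2m+1 ≤ √d`.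
-/

/-- `s` stands for `√d`. -/
theorem add_le_add_mul_of_sq_sub_mul_sq_eq {c d a b : ℤ} {s : ℝ} (hs : 0 ≤ s)
    (hsd : s ^ 2 = d) (hcd : c ^ 2 ≤ d) (ha : 0 < a) (hb : 0 < b)
    (h : a ^ 2 - d * b ^ 2 = c ^ 2 - d) : (c : ℝ) + s ≤ a + b * s := by
  have hcs : (c : ℝ) ≤ s := le_of_sq_le_sq (by rw [hsd]; exact_mod_cast hcd) hs
  obtain rfl | hb2 := (show 1 ≤ b by omega).eq_or_lt
  · have hca : c ≤ a := le_of_sq_le_sq (by linarith) ha.le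
    push_cast
    linarith [(Int.cast_le (R := ℝ)).mpr hca]
  · have ha1 : (1 : ℝ) ≤ a := by exact_mod_cast ha
    have hb2 : (2 : ℝ) ≤ b := by exact_mod_cast hb2
    nlinarith

/-- For every nonnegative integer `m`, the pair `(a, b) = (2m+1, 1)` is the minimal positive
integer solution of `a² - 4eb² = -11` with `e = m² + m + 3`: it is a solution, and any positive
solution `(a', b')` satisfies `a' + 2b'√e ≥ a + 2b√e`. -/
theorem minimal_solution_of_pell_like (m : ℕ) :
    ((2 * (m : ℤ) + 1) ^ 2 - 4 * ((m : ℤ) ^ 2 + m + 3) * 1 ^ 2 = -11) ∧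
    ∀ a' b' : ℤ, 0 < a' → 0 < b' →
      a' ^ 2 - 4 * ((m : ℤ) ^ 2 + m + 3) * b' ^ 2 = -11 →
      (2 * (m : ℝ) + 1) + 2 * 1 * Real.sqrt ((m : ℝ) ^ 2 + m + 3) ≤
        (a' : ℝ) + 2 * (b' : ℝ) * Real.sqrt ((m : ℝ) ^ 2 + m + 3) := by
  refine ⟨by ring, fun a' b' ha hb h => ?_⟩
  have hsd : (2 * Real.sqrt ((m : ℝ) ^ 2 + m + 3)) ^ 2 =
      ((4 * ((m : ℤ) ^ 2 + m + 3) : ℤ) : ℝ) := by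
    rw [mul_pow, Real.sq_sqrt (by positivity)]
    push_cast
    ring
  have hmin := add_le_add_mul_of_sq_sub_mul_sq_eq (c := 2 * m + 1) (by positivity) hsd
    (by nlinarith) ha hb (by linarith)
  push_cast at hmin
  linarith
end

section
/- Let e be a positive integer that is not a perfect square, let a1, b1 be positive integers with a1^2 - e*b1^2 = 1, and let a2, b2 be positive integers with a2^2 - 4e*b2^2 = -11. Then the pair (a,b) = (2e*b1*b2 - a1*a2, a1*b2 - (1/2)*a2*b1) (when b1 is even so that b is an integer) satisfies a/(2b) ≤ e*b1/a1; that is, the class corresponding to this solution is movable. Equivalently, a1*(2e*b1*b2 - a1*a2) ≤ e*b1*(2a1*b2 - a2*b1). -/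
theorem movable_class_inequality_general (e a1 b1 a2 b2 : ℤ)
    (hpell : a1 ^ 2 - e * b1 ^ 2 = 1)
    (ha2 : 0 < a2) :
    a1 * (2 * e * b1 * b2 - a1 * a2) ≤ e * b1 * (2 * a1 * b2 - a2 * b1) := by
  have gap : e * b1 * (2 * a1 * b2 - a2 * b1) - a1 * (2 * e * b1 * b2 - a1 * a2)
      = a2 * (a1 ^ 2 - e * b1 ^ 2) := by ring
  rw [hpell, mul_one] at gap
  linarith

/-- Let `e` be a positive nonsquare integer, `a₁, b₁ > 0` with `a₁² - eb₁² = 1` and `b₁` even,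
and `a₂, b₂ > 0` with `a₂² - 4eb₂² = -11`. Then the class corresponding to the solution
`(2eb₁b₂ - a₁a₂, a₁b₂ - a₂b₁/2)` is movable: `a₁(2eb₁b₂ - a₁a₂) ≤ eb₁(2a₁b₂ - a₂b₁)`. -/
theorem movable_class_inequality (e a1 b1 a2 b2 : ℤ) (he : 0 < e) (hns : ¬ IsSquare e)
    (ha1 : 0 < a1) (hb1 : 0 < b1) (hpell : a1 ^ 2 - e * b1 ^ 2 = 1)
    (hb1even : Even b1)
    (ha2 : 0 < a2) (hb2 : 0 < b2) (h11 : a2 ^ 2 - 4 * e * b2 ^ 2 = -11) :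
    a1 * (2 * e * b1 * b2 - a1 * a2) ≤ e * b1 * (2 * a1 * b2 - a2 * b1) :=
  movable_class_inequality_general e a1 b1 a2 b2 hpell ha2
end

section
/- Let W be a 3-dimensional complex vector space with a fixed generator η of Λ³W, defining det(x,y,z) by x∧y∧z = det(x,y,z)·η. There exists a unique alternating trilinear form σ₀ on Sym³W such that σ₀(x³, y³, z³) = det(x,y,z)³ for all x, y, z in W. -/
open MvPolynomial

/-- `Sym³W` for `W` a 3-dimensional complex vector space, modeled as the space of
homogeneous cubic polynomials in three variables. -/
noncomputable def Sym3W : Submodule ℂ (MvPolynomial (Fin 3) ℂ) :=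
  homogeneousSubmodule (Fin 3) ℂ 3

/-- The cube `w³ ∈ Sym³W` of a vector `w ∈ W`. -/
noncomputable def cubePoly (w : Fin 3 → ℂ) : MvPolynomial (Fin 3) ℂ :=
  (∑ i, C (w i) * X i) ^ 3

lemma cubePoly_mem (w : Fin 3 → ℂ) : cubePoly w ∈ Sym3W := by
  have h1 : (∑ i, C (w i) * X i : MvPolynomial (Fin 3) ℂ).IsHomogeneous 1 := by
    apply IsHomogeneous.sum
    intro i _
    simpa using (isHomogeneous_X ℂ i).C_mul (w i)
  simpa [Sym3W, mem_homogeneousSubmodule, cubePoly] using h1.pow 3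

/-- The cube map `W → Sym³W`. -/
noncomputable def cube (w : Fin 3 → ℂ) : Sym3W := ⟨cubePoly w, cubePoly_mem w⟩

/-!
Uniqueness: the cubes span `Sym³W`. Cubic forms are spanned by products `Xᵢ Xⱼ Xₖ`, and by
polarization `6 ℓ₁ℓ₂ℓ₃` is a signed sum of the seven cubes `(ℓ₁ + ℓ₂ + ℓ₃)³, (ℓ₁ + ℓ₂)³, …, ℓ₃³`.

Existence: Cayley's Ω-process. With `Ω = det (∂/∂x⁽ᵗ⁾ᵢ)`, the constant `Ω³ (f(x⁽⁰⁾) g(x⁽¹⁾) h(x⁽²⁾))`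
is an alternating trilinear function of `(f, g, h)`, and on cubes of linear forms `a, b, c` it
equals `6³ det(a, b, c)³`. Expanding the cube of the determinant writes this form as the
alternatization of `∑_{ρ,τ} sgn ρ sgn τ ∏ᵤ ∂ᵤ ∂_{ρu} ∂_{τu}`, applied factor by factor.
-/

open Module Equiv

theorem AlternatingMap.ext_of_span_range_eq_top {K V N ι α : Type*} [Field K]
    [AddCommGroup V] [Module K V] [AddCommGroup N] [Module K N] [Finite ι]
    {f : α → V} (hf : Submodule.span K (Set.range f) = ⊤) {g₁ g₂ : V [⋀^ι]→ₗ[K] N}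
    (h : ∀ w : ι → α, g₁ (f ∘ w) = g₂ (f ∘ w)) : g₁ = g₂ := by
  refine (Basis.ofSpan hf.ge).ext_alternating fun v _ => ?_
  choose w hw using fun i => Basis.ofSpan_subset hf.ge ⟨v i, rfl⟩
  have hv : (fun i => Basis.ofSpan hf.ge (v i)) = f ∘ w := funext fun i => (hw i).symm
  rw [hv, h]

theorem Matrix.det_eq_sum_sign_mul_prod {n R : Type*} [Fintype n] [DecidableEq n] [CommRing R]
    (A : Matrix n n R) : A.det = ∑ ρ : Perm n, (Perm.sign ρ : R) * ∏ u, A u (ρ u) := by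
  rw [← Matrix.det_transpose, Matrix.det_apply]
  simp [Units.smul_def]

section LinearForm

variable {σ R : Type*} [Fintype σ] [CommSemiring R]

noncomputable def linearForm (w : σ → R) : MvPolynomial σ R :=
  ∑ i, C (w i) * X i

lemma linearForm_add (a b : σ → R) : linearForm (a + b) = linearForm a + linearForm b := by
  simp only [linearForm, Pi.add_apply, map_add, add_mul, Finset.sum_add_distrib]

lemma linearForm_single [DecidableEq σ] (i : σ) : linearForm (Pi.single i 1 : σ → R) = X i := by
  simp [linearForm, Pi.single_apply]

lemma pderiv_linearForm (i : σ) (w : σ → R) : pderiv i (linearForm w) = C (w i) := by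
  classical
  simp [linearForm, pderiv_X, Pi.single_apply]

lemma pderiv_C_mul_linearForm_pow (i : σ) (w : σ → R) (a : R) (n : ℕ) :
    pderiv i (C a * linearForm w ^ (n + 1)) = C (a * (n + 1) * w i) * linearForm w ^ n := by
  rw [pderiv_C_mul, pderiv_pow, pderiv_linearForm, add_tsub_cancel_right]
  simp only [map_mul, map_add, map_natCast, map_one, Nat.cast_add, Nat.cast_one]
  ring

end LinearForm

section ThirdPartial

variable {σ R : Type*} [CommSemiring R]

noncomputable def thirdPartial (i j k : σ) : MvPolynomial σ R →ₗ[R] R :=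
  lcoeff R 0 ∘ₗ (pderiv i).toLinearMap ∘ₗ (pderiv j).toLinearMap ∘ₗ (pderiv k).toLinearMap

lemma thirdPartial_apply (i j k : σ) (p : MvPolynomial σ R) :
    thirdPartial i j k p = coeff 0 (pderiv i (pderiv j (pderiv k p))) := rfl

lemma thirdPartial_linearForm_pow_three [Fintype σ] (i j k : σ) (w : σ → R) :
    thirdPartial i j k (linearForm w ^ 3) = 6 * w i * w j * w k := by
  rw [thirdPartial_apply, ← one_mul (linearForm w ^ 3), ← map_one C, pderiv_C_mul_linearForm_pow,
    pderiv_C_mul_linearForm_pow, pderiv_C_mul_linearForm_pow]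
  simp only [pow_zero, mul_one, coeff_zero_C]
  norm_num
  ring

end ThirdPartial

lemma cubePoly_eq_linearForm_pow (w : Fin 3 → ℂ) : cubePoly w = linearForm w ^ 3 := rfl

lemma linearForm_mul_mem_span_range_cubePoly (a b c : Fin 3 → ℂ) :
    linearForm a * linearForm b * linearForm c ∈ Submodule.span ℂ (Set.range cubePoly) := by
  have polarization : (6 : ℂ) • (linearForm a * linearForm b * linearForm c) =
      cubePoly (a + b + c) - cubePoly (a + b) - cubePoly (a + c) - cubePoly (b + c)
        + cubePoly a + cubePoly b + cubePoly c := by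
    simp only [cubePoly_eq_linearForm_pow, linearForm_add, smul_eq_C_mul, map_ofNat]
    ring
  rw [← Submodule.smul_mem_iff _ (by norm_num : (6 : ℂ) ≠ 0), polarization]
  have mem (w : Fin 3 → ℂ) : cubePoly w ∈ Submodule.span ℂ (Set.range cubePoly) :=
    Submodule.subset_span ⟨w, rfl⟩
  exact add_mem (add_mem (add_mem (sub_mem (sub_mem (sub_mem (mem _) (mem _)) (mem _))
    (mem _)) (mem _)) (mem _)) (mem _)

open scoped Pointwise in
lemma sym3W_le_span_range_cubePoly : Sym3W ≤ Submodule.span ℂ (Set.range cubePoly) := by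
  rw [Sym3W, ← homogeneousSubmodule_one_pow, homogeneousSubmodule_one_eq_span_X,
    Submodule.span_pow, Submodule.span_le]
  intro p hp
  rw [pow_three', Set.mem_mul] at hp
  obtain ⟨_, ⟨_, ⟨i, rfl⟩, _, ⟨j, rfl⟩, rfl⟩, _, ⟨k, rfl⟩, rfl⟩ := hp
  simpa only [linearForm_single, SetLike.mem_coe] using
    linearForm_mul_mem_span_range_cubePoly (Pi.single i 1) (Pi.single j 1) (Pi.single k 1)

lemma span_range_cube : Submodule.span ℂ (Set.range cube) = ⊤ := by
  apply Submodule.map_injective_of_injective Sym3W.injective_subtype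
  rw [Submodule.map_subtype_top, Submodule.map_span, ← Set.range_comp]
  exact le_antisymm (Submodule.span_le.2 (Set.range_subset_iff.2 cubePoly_mem))
    sym3W_le_span_range_cubePoly

lemma thirdPartial_cube (i j k : Fin 3) (w : Fin 3 → ℂ) :
    thirdPartial i j k (cube w : MvPolynomial (Fin 3) ℂ) = 6 * w i * w j * w k :=
  thirdPartial_linearForm_pow_three i j k w

noncomputable def preInvariantTrivector : MultilinearMap ℂ (fun _ : Fin 3 => Sym3W) ℂ :=
  ∑ ρ : Perm (Fin 3), ∑ τ : Perm (Fin 3), (Perm.sign ρ * Perm.sign τ) •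
    (MultilinearMap.mkPiAlgebra ℂ (Fin 3) ℂ).compLinearMap
      fun u => thirdPartial u (ρ u) (τ u) ∘ₗ Sym3W.subtype

lemma preInvariantTrivector_apply_cube (A : Matrix (Fin 3) (Fin 3) ℂ) :
    preInvariantTrivector (fun t => cube (A t)) = 216 * (∏ t, A t t) * A.det ^ 2 := by
  simp only [preInvariantTrivector, sum_apply, smul_apply, MultilinearMap.compLinearMap_apply,
    MultilinearMap.mkPiAlgebra_apply, LinearMap.comp_apply, Submodule.subtype_apply,
    thirdPartial_cube]
  rw [sq, Matrix.det_eq_sum_sign_mul_prod, Finset.sum_mul_sum, Finset.mul_sum]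
  refine Finset.sum_congr rfl fun ρ _ => ?_
  rw [Finset.mul_sum]
  refine Finset.sum_congr rfl fun τ _ => ?_
  simp only [Fin.prod_univ_three, Units.smul_def, zsmul_eq_mul]
  push_cast
  ring

noncomputable def invariantTrivector : Sym3W [⋀^Fin 3]→ₗ[ℂ] ℂ :=
  (216 : ℂ)⁻¹ • MultilinearMap.alternatization preInvariantTrivector

lemma invariantTrivector_apply_cube (A : Matrix (Fin 3) (Fin 3) ℂ) :
    invariantTrivector (fun t => cube (A t)) = A.det ^ 3 := by
  have permute_rows (π : Perm (Fin 3)) :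
      preInvariantTrivector (fun t => cube (A (π t))) = 216 * A.det ^ 2 * ∏ t, A (π t) t := by
    refine (preInvariantTrivector_apply_cube (A.submatrix π id)).trans ?_
    have sign_sq : ((Perm.sign π : ℤ) : ℂ) ^ 2 = 1 := by
      rw [← Int.cast_pow, ← Units.val_pow_eq_pow_val, Int.units_sq, Units.val_one, Int.cast_one]
    simp only [Matrix.det_permute, Matrix.submatrix_apply, id, mul_pow, sign_sq]
    ring
  rw [invariantTrivector, AlternatingMap.smul_apply, MultilinearMap.alternatization_apply]
  simp only [MultilinearMap.domDomCongr_apply, permute_rows, Units.smul_def, zsmul_eq_mul]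
  conv_rhs => rw [pow_succ]; arg 2; rw [Matrix.det_apply' A]
  simp only [smul_eq_mul, Finset.mul_sum]
  refine Finset.sum_congr rfl fun π _ => ?_
  ring

theorem exists_unique_invariant_trivector_general (c : ℂ) :
    ∃! σ : Sym3W [⋀^Fin 3]→ₗ[ℂ] ℂ,
      ∀ x y z : Fin 3 → ℂ,
        σ ![cube x, cube y, cube z] = (c * Matrix.det (Matrix.of ![x, y, z])) ^ 3 := by
  have hσ₀ (x y z : Fin 3 → ℂ) :
      (c ^ 3 • invariantTrivector) ![cube x, cube y, cube z] =
        (c * Matrix.det (Matrix.of ![x, y, z])) ^ 3 := by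
    have hrows : ![cube x, cube y, cube z] = fun t => cube (Matrix.of ![x, y, z] t) := by
      ext t : 1
      fin_cases t <;> rfl
    rw [AlternatingMap.smul_apply, hrows, invariantTrivector_apply_cube, smul_eq_mul, mul_pow]
  refine ⟨c ^ 3 • invariantTrivector, hσ₀, fun σ hσ => ?_⟩
  refine AlternatingMap.ext_of_span_range_eq_top span_range_cube fun w => ?_
  have hw : cube ∘ w = ![cube (w 0), cube (w 1), cube (w 2)] := by
    ext t : 1
    fin_cases t <;> rfl
  rw [hw, hσ, hσ₀]

/-- Fix a generator `η` of `Λ³W`, giving `det(x,y,z)` by `x∧y∧z = det(x,y,z)·η`; the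
generator corresponds to a nonzero scalar `c`, with `det_η = c · det`. There exists a unique
alternating trilinear form `σ₀` on `Sym³W` such that `σ₀(x³, y³, z³) = det(x,y,z)³`
for all `x, y, z ∈ W`. -/
theorem exists_unique_invariant_trivector (c : ℂ) (hc : c ≠ 0) :
    ∃! σ : Sym3W [⋀^Fin 3]→ₗ[ℂ] ℂ,
      ∀ x y z : Fin 3 → ℂ,
        σ ![cube x, cube y, cube z] = (c * Matrix.det (Matrix.of ![x, y, z])) ^ 3 :=
  exists_unique_invariant_trivector_general c
end

section
/- Let V₇ and W₃ be complex vector spaces of dimensions 7 and 3, let α ∈ Λ³V₇* be a 3-form with no 5-dimensional totally isotropic subspace (i.e., α does not vanish identically on any 5-dimensional subspace of V₇), and let β be a nonzero element of Λ³W₃*. Set V₁₀ = V₇ ⊕ W₃ and σ₀ = α + β (extended by zero). Then every 6-dimensional subspace W₆ ⊆ V₁₀ on which σ₀ vanishes identically is of the form W₄ ⊕ W₂, where W₄ ⊆ V₇ is a 4-dimensional subspace totally isotropic for α and W₂ ⊆ W₃ is 2-dimensional. Conversely, every such W₄ ⊕ W₂ is totally isotropic for σ₀. -/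
open Module

/-- A subspace `U` is totally isotropic for an alternating 3-form `f` if `f` vanishes on
all triples of vectors of `U`. -/
def TotallyIsotropic {V : Type*} [AddCommGroup V] [Module ℂ V]
    (f : V [⋀^Fin 3]→ₗ[ℂ] ℂ) (U : Submodule ℂ V) : Prop :=
  ∀ v1 ∈ U, ∀ v2 ∈ U, ∀ v3 ∈ U, f ![v1, v2, v3] = 0

/-!
Let `A` and `B` be the projections of `W₆` to `V₇` and `W₃`. If `B = W₃`, the vectors `k` with
`(0, k) ∈ W₆` span at most a line, since otherwise `β (x, k₁, k₂) = σ₀ (w, (0, k₁), (0, k₂))`, for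
any `w ∈ W₆` over `x`, would make `β` vanish on a basis. So some plane `P ⊆ W₃` avoids them; `β`
vanishes on `P`, hence `W₆ ∩ (V₇ × P)`, of dimension at least 5, projects injectively onto an
`α`-isotropic subspace of `V₇`, which is impossible. Therefore `dim B ≤ 2`, `β` vanishes on `B`,
so `A` is `α`-isotropic and `dim A ≤ 4`, and `W₆ ⊆ A × B` is an equality by counting dimensions.
-/

section Field

variable {K V : Type*} [Field K] [AddCommGroup V] [Module K V]

theorem AlternatingMap.map_eq_zero_of_finrank_lt {ι N : Type*} [Fintype ι] [AddCommGroup N]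
    [Module K N] [IsTorsionFree K N] (f : V [⋀^ι]→ₗ[K] N) (P : Submodule K V)
    [FiniteDimensional K P] (hP : finrank K P < Fintype.card ι) (v : ι → V) (hv : ∀ i, v i ∈ P) :
    f v = 0 := by
  refine f.map_linearDependent v fun hli ↦ hP.not_ge ?_
  have hli' : LinearIndependent K (P.subtype ∘ fun i ↦ (⟨v i, hv i⟩ : P)) := hli
  exact (hli'.of_comp P.subtype).fintype_card_le_finrank

theorem Submodule.exists_le_finrank_eq (U : Submodule K V) {k : ℕ} (hk : k ≤ finrank K U) :
    ∃ S ≤ U, finrank K S = k := by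
  obtain ⟨u, hu⟩ := exists_linearIndependent_of_le_finrank hk
  refine ⟨span K (Set.range (U.subtype ∘ u)), ?_, ?_⟩
  · rw [span_le]
    rintro _ ⟨i, rfl⟩
    exact (u i).2
  · rw [finrank_span_eq_card (hu.map' U.subtype U.ker_subtype), Fintype.card_fin]

theorem Submodule.finrank_map_eq_of_disjoint_ker {F : Type*} [AddCommGroup F] [Module K F]
    (f : V →ₗ[K] F) {U : Submodule K V} [FiniteDimensional K U]
    (h : Disjoint U (LinearMap.ker f)) : finrank K (U.map f) = finrank K U := by
  rw [← LinearMap.range_domRestrict]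
  exact LinearMap.finrank_range_of_inj (LinearMap.injective_domRestrict_iff.2 h)

theorem Submodule.finrank_prod {W : Type*} [AddCommGroup W] [Module K W]
    (p : Submodule K V) (q : Submodule K W) [FiniteDimensional K p] [FiniteDimensional K q] :
    finrank K (p.prod q) = finrank K p + finrank K q := by
  let e : p.prod q ≃ₗ[K] p × q :=
    { toFun := fun x ↦ (⟨x.1.1, x.2.1⟩, ⟨x.1.2, x.2.2⟩)
      invFun := fun y ↦ ⟨(y.1, y.2), y.1.2, y.2.2⟩
      map_add' := fun _ _ ↦ rfl
      map_smul' := fun _ _ ↦ rfl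
      left_inv := fun _ ↦ rfl
      right_inv := fun _ ↦ rfl }
  rw [e.finrank_eq, Module.finrank_prod]

theorem AlternatingMap.eq_zero_of_forall_cons_eq_zero [FiniteDimensional K V] {n : ℕ}
    (hV : finrank K V = n + 1) (f : V [⋀^Fin (n + 1)]→ₗ[K] K) (U : Submodule K V)
    (hU : n ≤ finrank K U) (h : ∀ x (u : Fin n → V), (∀ i, u i ∈ U) → f (Fin.cons x u) = 0) :
    f = 0 := by
  obtain ⟨u, hu⟩ := exists_linearIndependent_of_le_finrank hU
  have hu' := hu.map' U.subtype U.ker_subtype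
  have hspan : Submodule.span K (Set.range (U.subtype ∘ u)) < ⊤ := by
    refine lt_top_iff_ne_top.2 fun htop ↦ ?_
    have := finrank_span_eq_card hu'
    rw [htop, finrank_top, hV, Fintype.card_fin] at this
    omega
  obtain ⟨x, -, hx⟩ := SetLike.exists_of_lt hspan
  let b := basisOfLinearIndependentOfCardEqFinrank (hu'.finCons hx) (by simp [hV])
  rw [f.eq_smul_basis_det b, coe_basisOfLinearIndependentOfCardEqFinrank,
    h x (U.subtype ∘ u) fun i ↦ (u i).2, zero_smul]

end Field

section TotallyIsotropic

variable {V W : Type*} [AddCommGroup V] [Module ℂ V] [AddCommGroup W] [Module ℂ W]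

theorem TotallyIsotropic.mono {f : V [⋀^Fin 3]→ₗ[ℂ] ℂ} {U U' : Submodule ℂ V}
    (hU' : TotallyIsotropic f U') (h : U ≤ U') : TotallyIsotropic f U :=
  fun v1 h1 v2 h2 v3 h3 ↦ hU' v1 (h h1) v2 (h h2) v3 (h h3)

theorem totallyIsotropic_of_finrank_le_two (f : V [⋀^Fin 3]→ₗ[ℂ] ℂ) (U : Submodule ℂ V)
    [FiniteDimensional ℂ U] (hU : finrank ℂ U ≤ 2) : TotallyIsotropic f U := by
  intro v1 h1 v2 h2 v3 h3
  refine f.map_eq_zero_of_finrank_lt U (by simp; omega) _ fun i ↦ ?_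
  fin_cases i <;> assumption

theorem TotallyIsotropic.finrank_le [FiniteDimensional ℂ V] {f : V [⋀^Fin 3]→ₗ[ℂ] ℂ} {n : ℕ}
    (hf : ∀ S : Submodule ℂ V, finrank ℂ S = n + 1 → ¬ TotallyIsotropic f S)
    {U : Submodule ℂ V} (hU : TotallyIsotropic f U) : finrank ℂ U ≤ n := by
  by_contra! h
  obtain ⟨S, hSU, hS⟩ := U.exists_le_finrank_eq h
  exact hf S hS (hU.mono hSU)

variable (α : V [⋀^Fin 3]→ₗ[ℂ] ℂ) (β : W [⋀^Fin 3]→ₗ[ℂ] ℂ)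

/-- The form `σ₀ = α + β` on `V ⊕ W`. -/
def sumForm : (V × W) [⋀^Fin 3]→ₗ[ℂ] ℂ :=
  α.compLinearMap (LinearMap.fst ℂ V W) + β.compLinearMap (LinearMap.snd ℂ V W)

theorem sumForm_apply (a b c : V × W) :
    sumForm α β ![a, b, c] = α ![a.1, b.1, c.1] + β ![a.2, b.2, c.2] := by
  simp only [sumForm, AlternatingMap.add_apply, AlternatingMap.compLinearMap_apply]
  congr 2 <;> ext i <;> fin_cases i <;> rfl

variable {α β}

theorem TotallyIsotropic.prod_sumForm {p : Submodule ℂ V} {q : Submodule ℂ W}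
    (hp : TotallyIsotropic α p) (hq : TotallyIsotropic β q) :
    TotallyIsotropic (sumForm α β) (p.prod q) := by
  intro u1 h1 u2 h2 u3 h3
  rw [sumForm_apply, hp _ h1.1 _ h2.1 _ h3.1, hq _ h1.2 _ h2.2 _ h3.2, add_zero]

theorem TotallyIsotropic.map_fst {U : Submodule ℂ (V × W)}
    (hU : TotallyIsotropic (sumForm α β) U)
    (hβ : TotallyIsotropic β (U.map (LinearMap.snd ℂ V W))) :
    TotallyIsotropic α (U.map (LinearMap.fst ℂ V W)) := by
  rintro _ ⟨u1, h1, rfl⟩ _ ⟨u2, h2, rfl⟩ _ ⟨u3, h3, rfl⟩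
  have h := hU u1 h1 u2 h2 u3 h3
  have hβ0 : β ![u1.2, u2.2, u3.2] = 0 := hβ _ ⟨u1, h1, rfl⟩ _ ⟨u2, h2, rfl⟩ _ ⟨u3, h3, rfl⟩
  rwa [sumForm_apply, hβ0, add_zero] at h

end TotallyIsotropic

section Splitting

variable {V W : Type*} [AddCommGroup V] [Module ℂ V] [AddCommGroup W] [Module ℂ W]
  {α : V [⋀^Fin 3]→ₗ[ℂ] ℂ} {β : W [⋀^Fin 3]→ₗ[ℂ] ℂ}

theorem finrank_comap_inr_le_one [FiniteDimensional ℂ W] (hW : finrank ℂ W = 3) (hβ : β ≠ 0)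
    {U : Submodule ℂ (V × W)} (hU : TotallyIsotropic (sumForm α β) U)
    (htop : U.map (LinearMap.snd ℂ V W) = ⊤) :
    finrank ℂ (U.comap (LinearMap.inr ℂ V W)) ≤ 1 := by
  by_contra! h
  refine hβ (β.eq_zero_of_forall_cons_eq_zero hW _ h fun x k hk ↦ ?_)
  obtain ⟨u, hu, rfl⟩ : x ∈ U.map (LinearMap.snd ℂ V W) := htop ▸ Submodule.mem_top
  have h0 := hU u hu (0, k 0) (hk 0) (0, k 1) (hk 1)
  rw [sumForm_apply, α.map_coord_zero 1 rfl, zero_add] at h0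
  convert h0 using 2
  ext i
  fin_cases i <;> rfl

theorem exists_totallyIsotropic_of_map_snd_eq_top [FiniteDimensional ℂ V] [FiniteDimensional ℂ W]
    (hW : finrank ℂ W = 3) (hβ : β ≠ 0) {U : Submodule ℂ (V × W)}
    (hU : TotallyIsotropic (sumForm α β) U) (htop : U.map (LinearMap.snd ℂ V W) = ⊤) :
    ∃ A : Submodule ℂ V, TotallyIsotropic α A ∧ finrank ℂ U ≤ finrank ℂ A + 1 := by
  obtain ⟨C, hC⟩ := (U.comap (LinearMap.inr ℂ V W)).exists_isCompl
  obtain ⟨P, hPC, hP⟩ := C.exists_le_finrank_eq (k := 2) (by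
    have := Submodule.finrank_add_eq_of_isCompl hC
    have := finrank_comap_inr_le_one hW hβ hU htop
    omega)
  set T := (⊤ : Submodule ℂ V).prod P
  set U' := U ⊓ T
  refine ⟨U'.map (LinearMap.fst ℂ V W), ?_, ?_⟩
  · refine (hU.mono inf_le_left).map_fst
      ((totallyIsotropic_of_finrank_le_two β P hP.le).mono ?_)
    rintro _ ⟨u, hu, rfl⟩
    exact hu.2.2
  have hdisj : Disjoint U' (LinearMap.ker (LinearMap.fst ℂ V W)) := by
    rw [Submodule.disjoint_def]
    rintro ⟨v, w⟩ ⟨hvw, -, hw⟩ (hv : v = 0)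
    subst hv
    have hw0 : w = 0 := Submodule.disjoint_def.1 (hC.disjoint.mono_right hPC) w hvw hw
    simp [hw0]
  have hdim : finrank ℂ ↥(U ⊔ T) + finrank ℂ U' = finrank ℂ U + finrank ℂ T :=
    Submodule.finrank_sup_add_finrank_inf_eq U T
  have hT : finrank ℂ T = finrank ℂ V + 2 := by
    rw [Submodule.finrank_prod, finrank_top, hP]
  have hsup : finrank ℂ ↥(U ⊔ T) ≤ finrank ℂ V + 3 := by
    simpa [hW] using (U ⊔ T).finrank_le
  rw [Submodule.finrank_map_eq_of_disjoint_ker _ hdisj]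
  omega

end Splitting

theorem isotropic_sixfold_splits_general
    (V7 W3 : Type*) [AddCommGroup V7] [Module ℂ V7] [AddCommGroup W3] [Module ℂ W3]
    [FiniteDimensional ℂ V7] [FiniteDimensional ℂ W3]
    (h3 : finrank ℂ W3 = 3)
    (α : V7 [⋀^Fin 3]→ₗ[ℂ] ℂ) (β : W3 [⋀^Fin 3]→ₗ[ℂ] ℂ) (hβ : β ≠ 0)
    (hα : ∀ U : Submodule ℂ V7, finrank ℂ U = 5 → ¬ TotallyIsotropic α U)
    (σ : (V7 × W3) [⋀^Fin 3]→ₗ[ℂ] ℂ)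
    (hσ : σ = α.compLinearMap (LinearMap.fst ℂ V7 W3)
        + β.compLinearMap (LinearMap.snd ℂ V7 W3)) :
    (∀ W6 : Submodule ℂ (V7 × W3), finrank ℂ W6 = 6 → TotallyIsotropic σ W6 →
      ∃ W4 : Submodule ℂ V7, ∃ W2 : Submodule ℂ W3,
        finrank ℂ W4 = 4 ∧ finrank ℂ W2 = 2 ∧ TotallyIsotropic α W4 ∧
          W6 = W4.prod W2)
    ∧ ∀ (W4 : Submodule ℂ V7) (W2 : Submodule ℂ W3),
        finrank ℂ W4 = 4 → finrank ℂ W2 = 2 → TotallyIsotropic α W4 →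
          TotallyIsotropic σ (W4.prod W2) := by
  obtain rfl : σ = sumForm α β := hσ
  have hα4 {U : Submodule ℂ V7} (hU : TotallyIsotropic α U) : finrank ℂ U ≤ 4 :=
    TotallyIsotropic.finrank_le hα hU
  refine ⟨fun W6 h6 hW6 ↦ ?_, fun W4 W2 _ h2 hW4 ↦
    hW4.prod_sumForm (totallyIsotropic_of_finrank_le_two β W2 h2.le)⟩
  set A := W6.map (LinearMap.fst ℂ V7 W3)
  set B := W6.map (LinearMap.snd ℂ V7 W3)
  have hB : finrank ℂ B ≤ 2 := by
    by_contra! hB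
    have htop : B = ⊤ := Submodule.eq_top_of_finrank_eq (le_antisymm B.finrank_le (h3 ▸ hB))
    obtain ⟨A', hA', hdim⟩ := exists_totallyIsotropic_of_map_snd_eq_top h3 hβ hW6 htop
    have := hα4 hA'
    omega
  have hA : TotallyIsotropic α A := hW6.map_fst (totallyIsotropic_of_finrank_le_two β B hB)
  have hle : W6 ≤ A.prod B := (Submodule.le_prod_iff ℂ V7 W3).2 ⟨le_rfl, le_rfl⟩
  have hprod := Submodule.finrank_prod A B
  have hA4 := hα4 hA
  have h6le := Submodule.finrank_mono hle
  exact ⟨A, B, by omega, by omega, hA, Submodule.eq_of_le_of_finrank_le hle (by omega)⟩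

/-- Let `V₇`, `W₃` have dimensions 7 and 3, let `α` be a 3-form on `V₇` with no
5-dimensional totally isotropic subspace, let `β ≠ 0` be a 3-form on `W₃`, and let
`σ₀ = α + β` on `V₁₀ = V₇ ⊕ W₃`. Then every 6-dimensional subspace `W₆ ⊆ V₁₀` totally
isotropic for `σ₀` is of the form `W₄ ⊕ W₂` with `W₄ ⊆ V₇` a 4-dimensional subspace
totally isotropic for `α` and `W₂ ⊆ W₃` 2-dimensional; conversely every such `W₄ ⊕ W₂`
is totally isotropic for `σ₀`. -/
theorem isotropic_sixfold_splits
    (V7 W3 : Type*) [AddCommGroup V7] [Module ℂ V7] [AddCommGroup W3] [Module ℂ W3]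
    [FiniteDimensional ℂ V7] [FiniteDimensional ℂ W3]
    (h7 : finrank ℂ V7 = 7) (h3 : finrank ℂ W3 = 3)
    (α : V7 [⋀^Fin 3]→ₗ[ℂ] ℂ) (β : W3 [⋀^Fin 3]→ₗ[ℂ] ℂ) (hβ : β ≠ 0)
    (hα : ∀ U : Submodule ℂ V7, finrank ℂ U = 5 → ¬ TotallyIsotropic α U)
    (σ : (V7 × W3) [⋀^Fin 3]→ₗ[ℂ] ℂ)
    (hσ : σ = α.compLinearMap (LinearMap.fst ℂ V7 W3)
        + β.compLinearMap (LinearMap.snd ℂ V7 W3)) :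
    (∀ W6 : Submodule ℂ (V7 × W3), finrank ℂ W6 = 6 → TotallyIsotropic σ W6 →
      ∃ W4 : Submodule ℂ V7, ∃ W2 : Submodule ℂ W3,
        finrank ℂ W4 = 4 ∧ finrank ℂ W2 = 2 ∧ TotallyIsotropic α W4 ∧
          W6 = W4.prod W2)
    ∧ ∀ (W4 : Submodule ℂ V7) (W2 : Submodule ℂ W3),
        finrank ℂ W4 = 4 → finrank ℂ W2 = 2 → TotallyIsotropic α W4 →
          TotallyIsotropic σ (W4.prod W2) :=
  isotropic_sixfold_splits_general V7 W3 h3 α β hβ hα σ hσ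
end

section
/- Let V₅ be a 5-dimensional complex vector space with a nondegenerate symmetric bilinear form q, and identify Λ²V₅ with the space of q-skew endomorphisms of V₅ via (x∧z)(u) = q(x,u)z - q(z,u)x. Define the trivector σ₀(a,b,c) = Tr(a∘b∘c) on V₁₀ = Λ²V₅. If x ∈ V₅ satisfies q(x,x) = 0, then σ₀ vanishes on Λ²(x ∧ x^{⊥q}) ∧ V₁₀; more precisely, for all z, z' ∈ x^{⊥q}, the endomorphisms a_z and a_{z'} associated with x∧z and x∧z' commute and their composition is q-symmetric, so that Tr(a_z ∘ a_{z'} ∘ c) = 0 for every q-skew endomorphism c. -/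
/-!
Since `x` is isotropic and orthogonal to `z` and `z'`, the composition `a_z ∘ a_{z'}` collapses
to the rank-one map `-q(z,z') · q(x,·) x`, which is symmetric in `z, z'` and `q`-symmetric. The
trace of a rank-one map `q(x,·) x` composed with `c` is `q(x, c x)`, and this vanishes for
`q`-skew `c` because `q(x, c x) = q(c x, x) = -q(x, c x)`.
-/

open Module

open LinearMap (BilinForm)

namespace LinearMap

variable {R M : Type*} [CommRing R] [AddCommGroup M] [Module R M]

namespace BilinForm

/-- `x ∧ z ∈ Λ²M`, viewed as a `B`-skew endomorphism of `M`. -/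
def wedgeEnd (B : BilinForm R M) (x z : M) : Module.End R M :=
  (B x).smulRight z - (B z).smulRight x

theorem wedgeEnd_comp_wedgeEnd_of_isotropic (B : BilinForm R M) {x z z' : M}
    (hx : B x x = 0) (hxz' : B x z' = 0) (hzx : B z x = 0) :
    B.wedgeEnd x z ∘ₗ B.wedgeEnd x z' = (-B z z') • (B x).smulRight x := by
  ext u
  simp [wedgeEnd, hx, hxz', hzx, smul_smul, mul_comm]

theorem IsSymm.isSelfAdjoint_smulRight_self {B : BilinForm R M} (hB : B.IsSymm) (x : M) :
    B.IsSelfAdjoint ((B x).smulRight x) := fun u v => by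
  simp only [smulRight_apply, map_smul, LinearMap.smul_apply, smul_eq_mul, hB.eq u x, mul_comm]

theorem IsSymm.apply_self_apply_eq_zero_of_isSkewAdjoint [IsAddTorsionFree R] {B : BilinForm R M}
    (hB : B.IsSymm) {c : Module.End R M} (hc : B.IsSkewAdjoint c) (x : M) : B x (c x) = 0 := by
  have h := hc x x
  rw [hB.eq, Pi.neg_apply, map_neg] at h
  exact self_eq_neg.mp h

end BilinForm

theorem trace_smulRight_comp [Module.Free R M] [Module.Finite R M] (f : M →ₗ[R] R) (m : M)
    (c : Module.End R M) :
    trace R M (f.smulRight m ∘ₗ c) = f (c m) := by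
  have h : f.smulRight m ∘ₗ c = (f ∘ₗ c).smulRight m := by ext; simp
  rw [h, trace_smulRight, comp_apply]

end LinearMap

theorem trace_trivector_vanishes_general
    (V : Type*) [AddCommGroup V] [Module ℂ V] [FiniteDimensional ℂ V]
    (q : LinearMap.BilinForm ℂ V) (hsymm : ∀ u v, q u v = q v u)
    (x z z' : V) (hx : q x x = 0) (hz : q x z = 0) (hz' : q x z' = 0)
    (a : V → (V →ₗ[ℂ] V))
    (ha : ∀ y, a y = (q x).smulRight y - (q y).smulRight x) :
    (a z ∘ₗ a z' = a z' ∘ₗ a z)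
    ∧ (∀ u v, q ((a z ∘ₗ a z') u) v = q u ((a z ∘ₗ a z') v))
    ∧ ∀ c : V →ₗ[ℂ] V, (∀ u v, q (c u) v = - q u (c v)) →
        LinearMap.trace ℂ V (a z ∘ₗ a z' ∘ₗ c) = 0 := by
  obtain rfl : a = q.wedgeEnd x := funext ha
  have hq : q.IsSymm := ⟨hsymm⟩
  have hzz' := q.wedgeEnd_comp_wedgeEnd_of_isotropic hx hz' (by rw [hsymm, hz])
  have hz'z := q.wedgeEnd_comp_wedgeEnd_of_isotropic hx hz (by rw [hsymm, hz'])
  refine ⟨by rw [hzz', hz'z, hsymm z z'], ?_, fun c hc => ?_⟩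
  · rw [hzz']
    exact (hq.isSelfAdjoint_smulRight_self x).smul _
  · have hc' : q.IsSkewAdjoint c := fun u v => by simp [hc]
    rw [← LinearMap.comp_assoc, hzz', LinearMap.smul_comp, map_smul,
      LinearMap.trace_smulRight_comp, hq.apply_self_apply_eq_zero_of_isSkewAdjoint hc', smul_zero]

/-- Let `V₅` be 5-dimensional with a nondegenerate symmetric bilinear form `q`, and for
`x, z ∈ V₅` let `a_z` be the `q`-skew endomorphism associated with `x ∧ z`, namely
`a_z(u) = q(x,u)z - q(z,u)x`. If `q(x,x) = 0` and `z, z' ∈ x^⊥`, then `a_z` and `a_{z'}`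
commute, their composition is `q`-symmetric, and `Tr(a_z ∘ a_{z'} ∘ c) = 0` for every
`q`-skew endomorphism `c` (so the trivector `σ₀(a,b,c) = Tr(a∘b∘c)` on `Λ²V₅` vanishes
on `Λ²(x ∧ x^⊥) ∧ Λ²V₅`). -/
theorem trace_trivector_vanishes
    (V : Type*) [AddCommGroup V] [Module ℂ V] [FiniteDimensional ℂ V]
    (h5 : finrank ℂ V = 5)
    (q : LinearMap.BilinForm ℂ V) (hsymm : ∀ u v, q u v = q v u)
    (hnd : q.Nondegenerate)
    (x z z' : V) (hx : q x x = 0) (hz : q x z = 0) (hz' : q x z' = 0)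
    (a : V → (V →ₗ[ℂ] V))
    (ha : ∀ y, a y = (q x).smulRight y - (q y).smulRight x) :
    (a z ∘ₗ a z' = a z' ∘ₗ a z)
    ∧ (∀ u v, q ((a z ∘ₗ a z') u) v = q u ((a z ∘ₗ a z') v))
    ∧ ∀ c : V →ₗ[ℂ] V, (∀ u v, q (c u) v = - q u (c v)) →
        LinearMap.trace ℂ V (a z ∘ₗ a z' ∘ₗ c) = 0 :=
  trace_trivector_vanishes_general V q hsymm x z z' hx hz hz' a ha
end
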